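/- arXiv:2506.03612 — 3 statements merged into one kernel-verified Lean document; each statement's English description precedes it below -/
import Mathlib

section
/- Let G be a connected undirected graph, s,t nonadjacent vertices, and S, T minimal s,t-separators of G. Then C_s(G−S) ⊆ C_s(G−T) if and only if S ⊆ T ∪ C_s(G−T), which holds if and only if T ⊆ S ∪ C_t(G−S). -/
variable {V : Type*}

/-- Reachability in `G` by a walk avoiding the vertex set `S`. -/
def ReachAvoid (G : SimpleGraph V) (S : Set V) (u v : V) : Prop :=
  ∃ w : G.Walk u v, ∀ x ∈ w.support, x ∉ S

/-- The connected component of `G − S` containing `s`, as a subset of `V`. -/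
def compOf (G : SimpleGraph V) (S : Set V) (s : V) : Set V :=
  {v | ReachAvoid G S s v}

/-- `S` is an `s,t`-separator of `G`. -/
def IsSep (G : SimpleGraph V) (s t : V) (S : Set V) : Prop :=
  s ∉ S ∧ t ∉ S ∧ ¬ ReachAvoid G S s t

/-- `S` is a minimal `s,t`-separator of `G`. -/
def IsMinSep (G : SimpleGraph V) (s t : V) (S : Set V) : Prop :=
  IsSep G s t S ∧ ∀ S' ⊂ S, ¬ IsSep G s t S'

/-- The open neighborhood of a vertex set `X`. -/
def nbhd (G : SimpleGraph V) (X : Set V) : Set V :=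
  {v | v ∉ X ∧ ∃ x ∈ X, G.Adj x v}

/-- The closed neighborhood of a vertex `v`. -/
def clNbhd (G : SimpleGraph V) (v : V) : Set V :=
  insert v (G.neighborSet v)

/-- `S` is a minimal `s,t`-separator close to `sA`. -/
def CloseTo (G : SimpleGraph V) (s t : V) (A : Set V) (S : Set V) : Prop :=
  IsMinSep G s t S ∧ A ⊆ compOf G S s ∧
    ∀ T, IsMinSep G s t T → T ≠ S → A ⊆ compOf G T s →
      ¬ compOf G T s ⊆ compOf G S s

/-- `G` contains no asteroidal triple. -/
def IsATFree (G : SimpleGraph V) : Prop :=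
  ¬ ∃ a b c : V, a ≠ b ∧ a ≠ c ∧ b ≠ c ∧
    ¬ G.Adj a b ∧ ¬ G.Adj a c ∧ ¬ G.Adj b c ∧
    (∃ w : G.Walk a b, ∀ x ∈ w.support, x ∉ clNbhd G c) ∧
    (∃ w : G.Walk a c, ∀ x ∈ w.support, x ∉ clNbhd G b) ∧
    (∃ w : G.Walk b c, ∀ x ∈ w.support, x ∉ clNbhd G a)

/-- `S` is an `A,B`-separator. -/
def IsABSep (G : SimpleGraph V) (A B : Set V) (S : Set V) : Prop :=
  S ⊆ (A ∪ B)ᶜ ∧ ∀ a ∈ A, ∀ b ∈ B, ¬ ReachAvoid G S a b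

/-- `S` is a minimal `A,B`-separator. -/
def IsMinABSep (G : SimpleGraph V) (A B S : Set V) : Prop :=
  IsABSep G A B S ∧ ∀ S' ⊂ S, ¬ IsABSep G A B S'

/-- `S` is a safe (connectivity-preserving) `A,B`-separator: removing `S`
leaves two distinct components, one containing `A` and one containing `B`. -/
def IsSafeSep (G : SimpleGraph V) (A B S : Set V) : Prop :=
  S ⊆ (A ∪ B)ᶜ ∧ ∃ a b : V, a ∉ S ∧ b ∉ S ∧
    A ⊆ compOf G S a ∧ B ⊆ compOf G S b ∧
    Disjoint (compOf G S a) (compOf G S b)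

/-- The induced subgraph on `X` is connected (any two vertices of `X` are joined
by a walk staying in `X`). -/
def ConnIn (G : SimpleGraph V) (X : Set V) : Prop :=
  ∀ x ∈ X, ∀ y ∈ X, ∃ w : G.Walk x y, ∀ z ∈ w.support, z ∈ X

/-- The graph obtained from `G` by contracting `{s} ∪ A` to the vertex `s`
(the vertices of `A` become isolated). -/
def contractGraph (G : SimpleGraph V) (s : V) (A : Set V) : SimpleGraph V where
  Adj u v := u ∉ A ∧ v ∉ A ∧ u ≠ v ∧
    (G.Adj u v ∨ (u = s ∧ ∃ a ∈ A, G.Adj a v) ∨ (v = s ∧ ∃ a ∈ A, G.Adj a u))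
  symm := by
    constructor
    rintro u v ⟨hu, hv, hne, h⟩
    refine ⟨hv, hu, hne.symm, ?_⟩
    rcases h with h | h | h
    · exact Or.inl h.symm
    · exact Or.inr (Or.inr h)
    · exact Or.inr (Or.inl h)
  loopless := by
    constructor
    rintro u ⟨_, _, hne, _⟩
    exact hne rfl

/-- The graph obtained from `G` by adding all edges from `s` to `N_G[A]`. -/
def addApex (G : SimpleGraph V) (s : V) (A : Set V) : SimpleGraph V where
  Adj u v := G.Adj u v ∨
    (u = s ∧ v ≠ s ∧ v ∈ A ∪ nbhd G A) ∨
    (v = s ∧ u ≠ s ∧ u ∈ A ∪ nbhd G A)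
  symm := by
    constructor
    rintro u v (h | h | h)
    · exact Or.inl h.symm
    · exact Or.inr (Or.inr h)
    · exact Or.inr (Or.inl h)
  loopless := by
    constructor
    rintro u (h | ⟨h1, h2, _⟩ | ⟨h1, h2, _⟩)
    · exact G.loopless.irrefl u h
    · exact h2 h1
    · exact h2 h1

/-- The graph obtained from `G` by subdividing every edge. -/
def subdiv (G : SimpleGraph V) : SimpleGraph (V ⊕ G.edgeSet) where
  Adj x y :=
    match x, y with
    | Sum.inl u, Sum.inr e => u ∈ (e : Sym2 V)
    | Sum.inr e, Sum.inl u => u ∈ (e : Sym2 V)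
    | _, _ => False
  symm := by
    constructor
    rintro (u | e) (v | f) h <;> exact h
  loopless := by
    constructor
    rintro (u | e) h <;> exact h

/-- The instance `2Dis(G,A,B)` of 2-Disjoint-Connected-Subgraphs has a solution. -/
def TwoDisSolvable (G : SimpleGraph V) (A B : Set V) : Prop :=
  ∃ A₁ B₁ : Set V, Disjoint A₁ B₁ ∧ A ⊆ A₁ ∧ B ⊆ B₁ ∧
    ConnIn G A₁ ∧ ConnIn G B₁

/-!
Minimal separators are full: every vertex of `S` has a neighbour in `C_s(G − S)` and one in
`C_t(G − S)`. Hence `C_s(G − S) ⊆ C_s(G − T)` puts every vertex of `S \ T` next to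
`C_s(G − T)`, giving `S ⊆ T ∪ C_s(G − T)`. Conversely, that inclusion makes `C_t(G − T)` avoid
`S`, hence `C_t(G − T) ⊆ C_t(G − S)`. These two implications, together with their versions for
`(s, S)` and `(t, T)` exchanged, form a cycle through the three conditions.
-/

section MinimalSeparators

variable {G : SimpleGraph V} {S T : Set V} {s t u v x y : V}

lemma ReachAvoid.symm (h : ReachAvoid G S u v) : ReachAvoid G S v u := by
  obtain ⟨w, hw⟩ := h
  exact ⟨w.reverse, by simpa using hw⟩

lemma ReachAvoid.trans (h₁ : ReachAvoid G S u v) (h₂ : ReachAvoid G S v x) :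
    ReachAvoid G S u x := by
  obtain ⟨w₁, hw₁⟩ := h₁
  obtain ⟨w₂, hw₂⟩ := h₂
  refine ⟨w₁.append w₂, fun z hz => ?_⟩
  rcases (SimpleGraph.Walk.mem_support_append_iff _ _).1 hz with h | h
  exacts [hw₁ z h, hw₂ z h]

lemma mem_compOf_self (hs : s ∉ S) : s ∈ compOf G S s :=
  ⟨.nil, by simpa using hs⟩

lemma notMem_of_mem_compOf (h : v ∈ compOf G S s) : v ∉ S := by
  obtain ⟨w, hw⟩ := h
  exact hw v w.end_mem_support

lemma mem_compOf_of_adj (hv : v ∈ compOf G S s) (hadj : G.Adj v y) (hy : y ∉ S) :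
    y ∈ compOf G S s :=
  hv.trans ⟨.cons hadj .nil, by simp [notMem_of_mem_compOf hv, hy]⟩

lemma mem_compOf_of_mem_support {w : G.Walk s v} (hw : ∀ x ∈ w.support, x ∉ S)
    (hx : x ∈ w.support) : x ∈ compOf G S s := by
  classical
  exact ⟨w.takeUntil x hx, fun z hz => hw z (w.support_takeUntil_subset_support hx hz)⟩

lemma compOf_subset_compOf_of_disjoint (h : Disjoint (compOf G T s) S) :
    compOf G T s ⊆ compOf G S s := by
  rintro v ⟨w, hw⟩
  exact ⟨w, fun x hx => Set.disjoint_left.1 h (mem_compOf_of_mem_support hw hx)⟩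

lemma IsSep.symm (h : IsSep G s t S) : IsSep G t s S :=
  ⟨h.2.1, h.1, fun h' => h.2.2 h'.symm⟩

lemma IsMinSep.symm (h : IsMinSep G s t S) : IsMinSep G t s S :=
  ⟨h.1.symm, fun S' hS' hsep => h.2 S' hS' hsep.symm⟩

lemma IsSep.disjoint_compOf (h : IsSep G s t S) : Disjoint (compOf G S s) (compOf G S t) :=
  Set.disjoint_left.2 fun _ hs ht => h.2.2 (hs.trans ht.symm)

lemma IsMinSep.exists_adj_of_mem (hS : IsMinSep G s t S) (hx : x ∈ S) :
    ∃ y ∈ compOf G S s, G.Adj y x := by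
  obtain ⟨⟨hs, ht, hst⟩, hmin⟩ := hS
  -- `S \ {x}` no longer separates; an `s,t`-walk avoiding it leaves `C_s(G − S)` through `x`.
  obtain ⟨w, hw⟩ : ReachAvoid G (S \ {x}) s t := by
    by_contra h
    exact hmin _ (Set.sdiff_singleton_ssubset.2 hx) ⟨fun h' => hs h'.1, fun h' => ht h'.1, h⟩
  obtain ⟨d, hd, hfst, hsnd⟩ := w.exists_boundary_dart (compOf G S s) (mem_compOf_self hs) hst
  have hdx : d.snd = x := by
    by_contra hne
    exact hsnd <| mem_compOf_of_adj hfst d.adj fun h =>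
      hw _ (w.dart_snd_mem_support_of_mem_darts hd) ⟨h, hne⟩
  exact ⟨d.fst, hfst, hdx ▸ d.adj⟩

lemma IsMinSep.subset_union_compOf (hS : IsMinSep G s t S)
    (h : compOf G S s ⊆ compOf G T s) : S ⊆ T ∪ compOf G T s := by
  intro x hx
  by_cases hxT : x ∈ T
  · exact Or.inl hxT
  · obtain ⟨y, hy, hadj⟩ := hS.exists_adj_of_mem hx
    exact Or.inr (mem_compOf_of_adj (h hy) hadj hxT)

lemma IsSep.compOf_subset_compOf (hT : IsSep G s t T) (h : S ⊆ T ∪ compOf G T s) :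
    compOf G T t ⊆ compOf G S t := by
  refine compOf_subset_compOf_of_disjoint (Set.disjoint_right.2 fun x hxS hxt => ?_)
  rcases h hxS with hxT | hxs
  · exact notMem_of_mem_compOf hxt hxT
  · exact Set.disjoint_left.1 hT.disjoint_compOf hxs hxt

end MinimalSeparators

theorem stmt0_general (G : SimpleGraph V) (s t : V) (S T : Set V)
    (hS : IsMinSep G s t S) (hT : IsMinSep G s t T) :
    (compOf G S s ⊆ compOf G T s ↔ S ⊆ T ∪ compOf G T s) ∧
    (S ⊆ T ∪ compOf G T s ↔ T ⊆ S ∪ compOf G S t) := by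
  have hab : compOf G S s ⊆ compOf G T s → S ⊆ T ∪ compOf G T s := hS.subset_union_compOf
  have hbc : S ⊆ T ∪ compOf G T s → T ⊆ S ∪ compOf G S t := fun h =>
    hT.symm.subset_union_compOf (hT.1.compOf_subset_compOf h)
  have hca : T ⊆ S ∪ compOf G S t → compOf G S s ⊆ compOf G T s :=
    hS.1.symm.compOf_subset_compOf
  exact ⟨⟨hab, hca ∘ hbc⟩, ⟨hbc, hab ∘ hca⟩⟩

theorem stmt0 (G : SimpleGraph V) (hconn : G.Connected) (s t : V)
    (hst : s ≠ t) (hadj : ¬ G.Adj s t) (S T : Set V)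
    (hS : IsMinSep G s t S) (hT : IsMinSep G s t T) :
    (compOf G S s ⊆ compOf G T s ↔ S ⊆ T ∪ compOf G T s) ∧
    (S ⊆ T ∪ compOf G T s ↔ T ⊆ S ∪ compOf G S t) :=
  stmt0_general G s t S T hS hT
end

section
/- Let G be a connected graph, s,t vertices, A ⊆ V(G)∖{s,t} such that G[{s}∪A] is connected, and let H be the graph obtained from G by contracting all of {s}∪A to the single vertex s. Then the minimal s,t-separators of H are exactly the minimal s,t-separators S of G for which A ⊆ C_s(G−S). -/
variable {V : Type*}

/-!
The vertices of `A` are isolated in the contraction `H`, so no minimal `s,t`-separator of `H`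
meets `A`. For a vertex set `S` disjoint from `A` and avoiding `s`, walks avoiding `S` transfer
in both directions: a walk of `G` is pushed forward along the map collapsing `A` onto `s`, and an
edge of `H` at the contracted vertex `s` unfolds into a walk of `G` through the connected set
`{s} ∪ A`. Hence `G` and `H` have the same `s,t`-separators disjoint from `A`, and therefore the
same minimal ones. Finally, by connectivity of `{s} ∪ A`, the condition `A ⊆ C_s(G − S)` says
exactly that `S` misses `A`.
-/

open SimpleGraph

section Walks

variable {W : Type*}

theorem exists_walk_image_of_adj {G : SimpleGraph V} {H : SimpleGraph W} (f : V → W)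
    (hf : ∀ ⦃x y⦄, G.Adj x y → f x = f y ∨ H.Adj (f x) (f y)) {u v : V} :
    ∀ w : G.Walk u v, ∃ p : H.Walk (f u) (f v), ∀ z ∈ p.support, ∃ x ∈ w.support, f x = z
  | .nil => ⟨.nil, by simp⟩
  | .cons hux q => by
    obtain ⟨p, hp⟩ := exists_walk_image_of_adj f hf q
    have hp' : ∀ z ∈ p.support, ∃ x ∈ (Walk.cons hux q).support, f x = z := fun z hz =>
      let ⟨x, hx, hxz⟩ := hp z hz
      ⟨x, Walk.support_cons hux q ▸ List.mem_cons_of_mem _ hx, hxz⟩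
    rcases hf hux with heq | hadj
    · exact ⟨p.copy heq.symm rfl, by simpa using hp'⟩
    · refine ⟨.cons hadj p, fun z hz => ?_⟩
      rw [Walk.support_cons, List.mem_cons] at hz
      rcases hz with rfl | hz
      · exact ⟨_, Walk.start_mem_support _, rfl⟩
      · exact hp' z hz

theorem exists_walk_of_forall_adj {G H : SimpleGraph V} (X : Set V)
    (h : ∀ ⦃x y⦄, H.Adj x y → ∃ p : G.Walk x y, ∀ z ∈ p.support, z = x ∨ z = y ∨ z ∈ X)
    {u v : V} : ∀ w : H.Walk u v, ∃ p : G.Walk u v, ∀ z ∈ p.support, z ∈ w.support ∨ z ∈ X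
  | .nil => ⟨.nil, by simp⟩
  | .cons hux q => by
    obtain ⟨p₁, hp₁⟩ := h hux
    obtain ⟨p₂, hp₂⟩ := exists_walk_of_forall_adj X h q
    refine ⟨p₁.append p₂, fun z hz => ?_⟩
    rw [Walk.mem_support_append_iff] at hz
    rcases hz with hz | hz
    · rcases hp₁ z hz with rfl | rfl | hz
      · exact Or.inl (Walk.start_mem_support _)
      · exact Or.inl (by simp)
      · exact Or.inr hz
    · rcases hp₂ z hz with hz | hz
      · exact Or.inl (by simp [hz])
      · exact Or.inr hz

theorem SimpleGraph.Walk.eq_of_mem_support_of_isolated {H : SimpleGraph V} {u v a : V}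
    (ha : ∀ y, ¬ H.Adj a y) : ∀ w : H.Walk u v, a ∈ w.support → u = a
  | .nil, hmem => (List.mem_singleton.mp hmem).symm
  | .cons hux q, hmem => by
    rw [Walk.support_cons, List.mem_cons] at hmem
    rcases hmem with rfl | hmem
    · rfl
    · exact absurd (eq_of_mem_support_of_isolated ha q hmem ▸ hux).symm (ha u)

end Walks

section Contraction

variable {G : SimpleGraph V} {s t : V} {A S : Set V}

open Classical in
noncomputable def collapse (s : V) (A : Set V) (x : V) : V :=
  if x ∈ A then s else x

lemma collapse_of_notMem {x : V} (hx : x ∉ A) : collapse s A x = x := if_neg hx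

lemma collapse_eq_or_adj (hsA : s ∉ A) {x y : V} (h : G.Adj x y) :
    collapse s A x = collapse s A y ∨
      (contractGraph G s A).Adj (collapse s A x) (collapse s A y) := by
  unfold collapse
  split_ifs with hx hy hy
  · exact Or.inl rfl
  · by_cases hys : s = y
    · exact Or.inl hys
    · exact Or.inr ⟨hsA, hy, hys, Or.inr (Or.inl ⟨rfl, x, hx, h⟩)⟩
  · by_cases hxs : x = s
    · exact Or.inl hxs
    · exact Or.inr ⟨hx, hsA, hxs, Or.inr (Or.inr ⟨rfl, y, hy, h.symm⟩)⟩
  · exact Or.inr ⟨hx, hy, h.ne, Or.inl h⟩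

lemma contractGraph_not_adj_of_mem {a y : V} (ha : a ∈ A) : ¬ (contractGraph G s A).Adj a y :=
  fun h => h.1 ha

lemma exists_walk_of_contractGraph_adj (hconnA : ConnIn G (insert s A)) {x y : V}
    (h : (contractGraph G s A).Adj x y) :
    ∃ p : G.Walk x y, ∀ z ∈ p.support, z = x ∨ z = y ∨ z ∈ insert s A := by
  obtain ⟨-, -, -, hxy | ⟨rfl, a, ha, hay⟩ | ⟨rfl, a, ha, hax⟩⟩ := h
  · exact ⟨hxy.toWalk, by simp⟩
  · obtain ⟨r, hr⟩ := hconnA x (Set.mem_insert _ _) a (Set.mem_insert_of_mem _ ha)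
    refine ⟨r.concat hay, fun z hz => ?_⟩
    rw [Walk.support_concat, List.mem_append, List.mem_singleton] at hz
    rcases hz with hz | rfl
    · exact Or.inr (Or.inr (hr z hz))
    · exact Or.inr (Or.inl rfl)
  · obtain ⟨r, hr⟩ := hconnA a (Set.mem_insert_of_mem _ ha) y (Set.mem_insert _ _)
    refine ⟨.cons hax.symm r, fun z hz => ?_⟩
    rw [Walk.support_cons, List.mem_cons] at hz
    rcases hz with rfl | hz
    · exact Or.inl rfl
    · exact Or.inr (Or.inr (hr z hz))

lemma reachAvoid_contractGraph_iff (hsA : s ∉ A) (hconnA : ConnIn G (insert s A))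
    (hsS : s ∉ S) (hSA : Disjoint S A) {u v : V} (hu : u ∉ A) (hv : v ∉ A) :
    ReachAvoid (contractGraph G s A) S u v ↔ ReachAvoid G S u v := by
  constructor
  · rintro ⟨w, hw⟩
    obtain ⟨p, hp⟩ :=
      exists_walk_of_forall_adj _ (fun _ _ => exists_walk_of_contractGraph_adj hconnA) w
    refine ⟨p, fun z hz => ?_⟩
    rcases hp z hz with hz | rfl | hz
    · exact hw z hz
    · exact hsS
    · exact hSA.notMem_of_mem_right hz
  · rintro ⟨w, hw⟩
    obtain ⟨p, hp⟩ :=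
      exists_walk_image_of_adj (collapse s A) (fun _ _ => collapse_eq_or_adj hsA) w
    refine ⟨p.copy (collapse_of_notMem hu) (collapse_of_notMem hv), fun z hz => ?_⟩
    rw [Walk.support_copy] at hz
    obtain ⟨x, hx, rfl⟩ := hp z hz
    unfold collapse
    split_ifs
    · exact hsS
    · exact hw x hx

lemma isSep_contractGraph_iff (hsA : s ∉ A) (htA : t ∉ A) (hconnA : ConnIn G (insert s A))
    (hSA : Disjoint S A) : IsSep (contractGraph G s A) s t S ↔ IsSep G s t S := by
  refine and_congr_right fun hsS => and_congr_right fun _ => not_congr ?_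
  exact reachAvoid_contractGraph_iff hsA hconnA hsS hSA hsA htA

end Contraction

section Separators

variable {G H : SimpleGraph V} {s t : V} {A S : Set V}

lemma subset_compOf_iff_disjoint (hconnA : ConnIn G (insert s A)) (hsS : s ∉ S) :
    A ⊆ compOf G S s ↔ Disjoint S A := by
  constructor
  · refine fun hA => Set.disjoint_right.2 fun a ha => ?_
    obtain ⟨w, hw⟩ := hA ha
    exact hw a w.end_mem_support
  · intro hSA a ha
    obtain ⟨w, hw⟩ := hconnA s (Set.mem_insert _ _) a (Set.mem_insert_of_mem _ ha)
    refine ⟨w, fun z hz => ?_⟩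
    rcases hw z hz with rfl | hz
    · exact hsS
    · exact hSA.notMem_of_mem_right hz

lemma IsMinSep.disjoint_of_isolated {X : Set V} (hX : ∀ x ∈ X, ∀ y, ¬ H.Adj x y)
    (hsX : s ∉ X) (h : IsMinSep H s t S) : Disjoint S X := by
  obtain ⟨⟨hsS, htS, hst⟩, hmin⟩ := h
  by_contra hSX
  obtain ⟨x, hxS, hxX⟩ := Set.not_disjoint_iff.1 hSX
  refine hmin (S \ X) (Set.sdiff_ssubset_left_iff.2 ⟨x, hxS, hxX⟩)
    ⟨fun h => hsS h.1, fun h => htS h.1, fun ⟨w, hw⟩ => hst ⟨w, fun z hz hzS => ?_⟩⟩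
  have hzX : z ∉ X := fun hzX => hsX (w.eq_of_mem_support_of_isolated (hX z hzX) hz ▸ hzX)
  exact hw z hz ⟨hzS, hzX⟩

lemma isMinSep_iff_of_isSep_iff
    (hsep : ∀ S', Disjoint S' A → (IsSep H s t S' ↔ IsSep G s t S')) (hSA : Disjoint S A) :
    IsMinSep H s t S ↔ IsMinSep G s t S := by
  refine and_congr (hsep S hSA) (forall₂_congr fun S' hS' => not_congr (hsep S' ?_))
  exact hSA.mono_left hS'.subset

end Separators

theorem stmt1_general (G : SimpleGraph V) (s t : V)
    (A : Set V) (hsA : s ∉ A) (htA : t ∉ A)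
    (hconnA : ConnIn G (insert s A)) :
    {S : Set V | IsMinSep (contractGraph G s A) s t S} =
      {S : Set V | IsMinSep G s t S ∧ A ⊆ compOf G S s} := by
  have hsep : ∀ S, Disjoint S A → (IsSep (contractGraph G s A) s t S ↔ IsSep G s t S) :=
    fun _ => isSep_contractGraph_iff hsA htA hconnA
  ext S
  constructor
  · intro h
    have hSA : Disjoint S A :=
      h.disjoint_of_isolated (fun _ ha _ => contractGraph_not_adj_of_mem ha) hsA
    exact ⟨(isMinSep_iff_of_isSep_iff hsep hSA).1 h,
      (subset_compOf_iff_disjoint hconnA h.1.1).2 hSA⟩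
  · rintro ⟨h, hA⟩
    exact (isMinSep_iff_of_isSep_iff hsep ((subset_compOf_iff_disjoint hconnA h.1.1).1 hA)).2 h

theorem stmt1 (G : SimpleGraph V) (hconn : G.Connected) (s t : V)
    (A : Set V) (hsA : s ∉ A) (htA : t ∉ A)
    (hconnA : ConnIn G (insert s A)) :
    {S : Set V | IsMinSep (contractGraph G s A) s t S} =
      {S : Set V | IsMinSep G s t S ∧ A ⊆ compOf G S s} :=
  stmt1_general G s t A hsA htA hconnA
end

section
/- Let G be a connected graph, s,t nonadjacent vertices, and S a minimal s,t-separator with S ⊆ N_G(t). If a vertex u ∉ C_s(G−S), then for every minimal s,t-separator T of G, u ∉ C_s(G−T). -/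
variable {V : Type*}

theorem ReachAvoid.of_mem_support {G : SimpleGraph V} {T : Set V} {s v x : V}
    (w : G.Walk s v) (hw : ∀ y ∈ w.support, y ∉ T) (hx : x ∈ w.support) :
    ReachAvoid G T s x := by
  classical
  exact ⟨w.takeUntil x hx, fun y hy => hw y (w.support_takeUntil_subset_support hx hy)⟩

theorem ReachAvoid.concat {G : SimpleGraph V} {T : Set V} {s x t : V}
    (h : ReachAvoid G T s x) (hxt : G.Adj x t) (ht : t ∉ T) : ReachAvoid G T s t := by
  obtain ⟨w, hw⟩ := h
  refine ⟨w.concat hxt, fun y hy => ?_⟩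
  rw [SimpleGraph.Walk.support_concat, List.mem_append, List.mem_singleton] at hy
  rcases hy with hy | rfl
  · exact hw y hy
  · exact ht

theorem compOf_subset_of_subset_neighborSet {G : SimpleGraph V} {s t : V} {S T : Set V}
    (hSt : S ⊆ G.neighborSet t) (htT : t ∉ T) (hT : ¬ ReachAvoid G T s t) :
    compOf G T s ⊆ compOf G S s := by
  rintro v ⟨w, hw⟩
  by_contra hv
  obtain ⟨x, hx, hxS⟩ : ∃ x ∈ w.support, x ∈ S := by
    by_contra! h
    exact hv ⟨w, h⟩
  exact hT ((ReachAvoid.of_mem_support w hw hx).concat (hSt hxS).symm htT)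

theorem stmt8_general (G : SimpleGraph V) (s t : V)
    (S : Set V) (hSN : S ⊆ G.neighborSet t)
    (u : V) (hu : u ∉ compOf G S s) :
    ∀ T : Set V, IsMinSep G s t T → u ∉ compOf G T s :=
  fun _ ⟨⟨_, htT, hT⟩, _⟩ huT => hu (compOf_subset_of_subset_neighborSet hSN htT hT huT)

theorem stmt8 (G : SimpleGraph V) (hconn : G.Connected) (s t : V)
    (hst : s ≠ t) (hadj : ¬ G.Adj s t)
    (S : Set V) (hS : IsMinSep G s t S) (hSN : S ⊆ G.neighborSet t)
    (u : V) (hu : u ∉ compOf G S s) :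
    ∀ T : Set V, IsMinSep G s t T → u ∉ compOf G T s :=
  stmt8_general G s t S hSN u hu
end
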